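/- Let g : [εT, ∞) → ℝ be differentiable with r g(r)² → 0 as r → ∞. Then ∫_{εT}^{T} (g'(r) + g(r)/r)² r² dr ≤ 10 ∫_{εT}^{∞} (g'(r))² r² dr. -/

import Mathlib

/-!
Since `(g' + g/r)² r² = (g + r g')² = (g')² r² + (r g²)'`, integrating over `(εT, T]` gives
`∫ (g')² r² + T g(T)² - εT g(εT)²`. The last term is `≤ 0`, and the same identity on `(T, b]`,
with `b g(b)² → 0`, bounds `T g(T)²` by `∫_T^∞ (g')² r²`. This yields the estimate with
constant `1`.
-/

open MeasureTheory Set Filter Topology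

section

variable {g : ℝ → ℝ}

lemma sq_add_div_mul_sq (x y : ℝ) {r : ℝ} (hr : r ≠ 0) :
    (y + x / r) ^ 2 * r ^ 2 = (x + r * y) ^ 2 := by
  field_simp
  ring

lemma hasDerivAt_mul_sq {r : ℝ} (hg : DifferentiableAt ℝ g r) :
    HasDerivAt (fun r => r * g r ^ 2)
      ((g r + r * deriv g r) ^ 2 - deriv g r ^ 2 * r ^ 2) r := by
  refine ((hasDerivAt_id' r).fun_mul (hg.hasDerivAt.fun_pow 2)).congr_deriv ?_
  norm_num
  ring

lemma integrableOn_sq_add_mul_deriv {c b : ℝ} (hg : ContinuousOn g (Icc c b))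
    (hK : IntegrableOn (fun r => deriv g r ^ 2 * r ^ 2) (Ioc c b)) :
    IntegrableOn (fun r => (g r + r * deriv g r) ^ 2) (Ioc c b) := by
  have hg2 : IntegrableOn (fun r => 2 * g r ^ 2) (Ioc c b) :=
    ((hg.pow 2).integrableOn_Icc.mono_set Ioc_subset_Icc_self).const_mul 2
  refine (hg2.add (hK.const_mul 2)).mono' ?_ ?_
  · exact (((hg.mono Ioc_subset_Icc_self).aestronglyMeasurable measurableSet_Ioc).add
      (aestronglyMeasurable_id.mul (measurable_deriv g).aestronglyMeasurable)).pow 2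
  · filter_upwards with r
    rw [Pi.add_apply, Real.norm_eq_abs, abs_of_nonneg (sq_nonneg _)]
    nlinarith [sq_nonneg (g r - r * deriv g r)]

lemma integral_sq_add_mul_deriv {c b : ℝ} (hcb : c ≤ b)
    (hg : ∀ r ∈ Icc c b, DifferentiableAt ℝ g r)
    (hK : IntegrableOn (fun r => deriv g r ^ 2 * r ^ 2) (Ioc c b)) :
    ∫ r in Ioc c b, (g r + r * deriv g r) ^ 2
      = (∫ r in Ioc c b, deriv g r ^ 2 * r ^ 2) + (b * g b ^ 2 - c * g c ^ 2) := by
  have hL := integrableOn_sq_add_mul_deriv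
    (fun r hr => (hg r hr).continuousAt.continuousWithinAt) hK
  have hFTC : ∫ r in Ioc c b, ((g r + r * deriv g r) ^ 2 - deriv g r ^ 2 * r ^ 2)
      = b * g b ^ 2 - c * g c ^ 2 := by
    rw [← intervalIntegral.integral_of_le hcb]
    apply intervalIntegral.integral_eq_sub_of_hasDerivAt
    · intro r hr
      exact hasDerivAt_mul_sq (hg r ((uIcc_of_le hcb).subset hr))
    · exact (intervalIntegrable_iff_integrableOn_Ioc_of_le hcb).2 (hL.sub hK)
  rw [integral_sub hL hK] at hFTC
  linarith

lemma mul_sq_le_integral_Ioi {T : ℝ} (hg : ∀ r ∈ Ici T, DifferentiableAt ℝ g r)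
    (hdecay : Tendsto (fun r => r * g r ^ 2) atTop (𝓝 0))
    (hK : IntegrableOn (fun r => deriv g r ^ 2 * r ^ 2) (Ioi T)) :
    T * g T ^ 2 ≤ ∫ r in Ioi T, deriv g r ^ 2 * r ^ 2 := by
  suffices T * g T ^ 2 - ∫ r in Ioi T, deriv g r ^ 2 * r ^ 2 ≤ 0 by linarith
  refine ge_of_tendsto hdecay ?_
  filter_upwards [eventually_ge_atTop T] with b hTb
  have hKb : IntegrableOn (fun r => deriv g r ^ 2 * r ^ 2) (Ioc T b) :=
    hK.mono_set Ioc_subset_Ioi_self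
  have hidentity := integral_sq_add_mul_deriv hTb (fun r hr => hg r hr.1) hKb
  have hL : 0 ≤ ∫ r in Ioc T b, (g r + r * deriv g r) ^ 2 :=
    setIntegral_nonneg measurableSet_Ioc fun r _ => sq_nonneg _
  have hKmono : ∫ r in Ioc T b, deriv g r ^ 2 * r ^ 2 ≤ ∫ r in Ioi T, deriv g r ^ 2 * r ^ 2 :=
    setIntegral_mono_set hK (Eventually.of_forall fun r => by positivity)
      Ioc_subset_Ioi_self.eventuallyLE
  linarith

theorem integral_sq_deriv_add_div_mul_sq_le {a T : ℝ} (ha : 0 ≤ a)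
    (hg : ∀ r ∈ Ici a, DifferentiableAt ℝ g r)
    (hdecay : Tendsto (fun r => r * g r ^ 2) atTop (𝓝 0))
    (hK : IntegrableOn (fun r => deriv g r ^ 2 * r ^ 2) (Ioi a)) :
    ∫ r in Ioc a T, (deriv g r + g r / r) ^ 2 * r ^ 2
      ≤ ∫ r in Ioi a, deriv g r ^ 2 * r ^ 2 := by
  have hKnonneg : 0 ≤ ∫ r in Ioi a, deriv g r ^ 2 * r ^ 2 :=
    setIntegral_nonneg measurableSet_Ioi fun r _ => by positivity
  rcases le_or_gt T a with hTa | haT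
  · simpa [Ioc_eq_empty_of_le hTa] using hKnonneg
  have hKaT : IntegrableOn (fun r => deriv g r ^ 2 * r ^ 2) (Ioc a T) :=
    hK.mono_set Ioc_subset_Ioi_self
  have hKT : IntegrableOn (fun r => deriv g r ^ 2 * r ^ 2) (Ioi T) :=
    hK.mono_set (Ioi_subset_Ioi haT.le)
  have hrewrite : ∫ r in Ioc a T, (deriv g r + g r / r) ^ 2 * r ^ 2
      = ∫ r in Ioc a T, (g r + r * deriv g r) ^ 2 :=
    setIntegral_congr_fun measurableSet_Ioc fun r hr =>
      sq_add_div_mul_sq _ _ (ha.trans_lt hr.1).ne'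
  have hidentity := integral_sq_add_mul_deriv haT.le (fun r hr => hg r hr.1) hKaT
  have hboundary := mul_sq_le_integral_Ioi (fun r hr => hg r (haT.le.trans hr)) hdecay hKT
  have hsplit : (∫ r in Ioc a T, deriv g r ^ 2 * r ^ 2) + ∫ r in Ioi T, deriv g r ^ 2 * r ^ 2
      = ∫ r in Ioi a, deriv g r ^ 2 * r ^ 2 := by
    rw [← setIntegral_union (Ioc_disjoint_Ioi le_rfl) measurableSet_Ioi hKaT hKT,
      Ioc_union_Ioi_eq_Ioi haT.le]
  have hleft : 0 ≤ a * g a ^ 2 := by positivity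
  linarith

end

theorem flux_control_general
    (ε T : ℝ) (hε : 0 < ε) (hT : 0 < T)
    (g : ℝ → ℝ)
    (hg : ∀ r ∈ Set.Ici (ε * T), DifferentiableAt ℝ g r)
    (hdecay : Filter.Tendsto (fun r => r * (g r)^2) Filter.atTop (nhds 0))
    (hK : IntegrableOn (fun r => (deriv g r)^2 * r^2) (Set.Ioi (ε * T))) :
    ∫ r in Set.Ioc (ε * T) T, (deriv g r + g r / r)^2 * r^2
      ≤ 10 * ∫ r in Set.Ioi (ε * T), (deriv g r)^2 * r^2 := by
  have hKnonneg : 0 ≤ ∫ r in Set.Ioi (ε * T), (deriv g r)^2 * r^2 :=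
    setIntegral_nonneg measurableSet_Ioi fun r _ => by positivity
  have hbound := integral_sq_deriv_add_div_mul_sq_le (T := T) (mul_pos hε hT).le hg hdecay hK
  linarith

/-- Flux-control estimate: for differentiable `g` on `[εT, ∞)` with
`r g(r)² → 0` at infinity,
`∫_{εT}^{T} (g' + g/r)² r² dr ≤ 10 ∫_{εT}^{∞} (g')² r² dr`. -/
theorem flux_control
    (ε T : ℝ) (hε : 0 < ε) (hε1 : ε < 1) (hT : 0 < T)
    (g : ℝ → ℝ)
    (hg : ∀ r ∈ Set.Ici (ε * T), DifferentiableAt ℝ g r)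
    (hdecay : Filter.Tendsto (fun r => r * (g r)^2) Filter.atTop (nhds 0))
    (hK : IntegrableOn (fun r => (deriv g r)^2 * r^2) (Set.Ioi (ε * T))) :
    ∫ r in Set.Ioc (ε * T) T, (deriv g r + g r / r)^2 * r^2
      ≤ 10 * ∫ r in Set.Ioi (ε * T), (deriv g r)^2 * r^2 :=
  flux_control_general ε T hε hT g hg hdecay hK
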